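/- Under the ROBE-Z setup with Z = 1 (feature hashing), for all x, y ∈ ℝⁿ the variance of the estimator Ŝ(x,y) equals (1/m)·( Σ_{i ≠ j} x_i² y_j² + Σ_{i ≠ j} x_i y_i x_j y_j ), where both sums range over ordered pairs of distinct indices i, j ∈ {0,…,n−1}. -/

import Mathlib

open Finset

noncomputable section

/-- Sign value of a Boolean: `true ↦ +1`, `false ↦ -1`. -/
def sgn (b : Bool) : ℝ := if b then 1 else -1

/-- The feature-hashing (ROBE-1) inner-product estimator `Ŝ(x,y)`, where the
location map is `idx i = h i`, as a function of the random sample `ω = (h, g)`. -/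
def est1 (n m : ℕ) (x y : Fin n → ℝ)
    (ω : (Fin n → Fin m) × (Fin n → Bool)) : ℝ :=
  ∑ j : Fin m,
    (∑ i : Fin n, x i * sgn (ω.2 i) * (if ω.1 i = j then 1 else 0)) *
    (∑ i : Fin n, y i * sgn (ω.2 i) * (if ω.1 i = j then 1 else 0))

/-- Expectation with respect to the uniform (product) measure on the finite
sample space of pairs `(h, g)`. -/
def expec1 (n m : ℕ) (f : ((Fin n → Fin m) × (Fin n → Bool)) → ℝ) : ℝ :=
  (∑ ω : (Fin n → Fin m) × (Fin n → Bool), f ω) /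
    (Fintype.card ((Fin n → Fin m) × (Fin n → Bool)))

/-- Variance of the feature-hashing estimator: `E[Ŝ²] - (E[Ŝ])²`. -/
def var1 (n m : ℕ) (x y : Fin n → ℝ) : ℝ :=
  expec1 n m (fun ω => (est1 n m x y ω) ^ 2) - (expec1 n m (est1 n m x y)) ^ 2

/-!
Write `Ŝ = Σᵢ xᵢ yᵢ + Σ_{i ≠ k} xᵢ y_k [h i = h k] σᵢ σ_k` with `σ = sgn ∘ g`. The diagonal part is
deterministic, so the variance is the second moment of the off-diagonal part, whose mean is zero.
For `i ≠ k` and `i' ≠ k'` the sign moment `E[σᵢ σ_k σᵢ' σ_k']` vanishes unless `{i', k'} = {i, k}`,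
because flipping a sign that occurs only once negates the product; in the two surviving cases the
hash factor has mean `P(h i = h k) = 1/m`.
-/

open scoped BigOperators

section Expectation

variable {K : Type*} [Field K] [CharZero K]

lemma expect_fst_mul_snd {α β : Type*} [Fintype α] [Fintype β] (f : α → K) (g : β → K) :
    𝔼 ω : α × β, f ω.1 * g ω.2 = (𝔼 a, f a) * 𝔼 b, g b := by
  rw [Fintype.expect_mul_expect, ← univ_product_univ,
    expect_product' univ univ fun a b => f a * g b]

lemma expect_const_add_sq_sub_sq_expect {Ω : Type*} [Fintype Ω] [Nonempty Ω] (c : K)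
    (T : Ω → K) :
    𝔼 ω, (c + T ω) ^ 2 - (𝔼 ω, (c + T ω)) ^ 2 = 𝔼 ω, T ω ^ 2 - (𝔼 ω, T ω) ^ 2 := by
  simp only [add_sq, expect_add_distrib, ← mul_expect, Fintype.expect_const]
  ring

lemma expect_ite_eq_one_zero {β : Type*} [Fintype β] [DecidableEq β] (c : β) :
    𝔼 b : β, (if b = c then (1 : K) else 0) = 1 / Fintype.card β := by
  rw [Fintype.expect_eq_sum_div_card, sum_ite_eq', if_pos (mem_univ c)]

lemma expect_ite_apply_eq_apply {ι β : Type*} [Fintype ι] [DecidableEq ι] [Fintype β]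
    [DecidableEq β] [Nonempty β] {i k : ι} (hik : i ≠ k) :
    𝔼 h : ι → β, (if h i = h k then (1 : K) else 0) = 1 / Fintype.card β := by
  rw [Fintype.expect_equiv (Equiv.funSplitAt i β) (fun h => if h i = h k then (1 : K) else 0)
      (fun p => if p.1 = p.2 ⟨k, hik.symm⟩ then (1 : K) else 0) fun h => rfl,
    ← univ_product_univ, expect_product, expect_comm]
  simp only [expect_ite_eq_one_zero, Fintype.expect_const]

end Expectation

lemma sum_offDiag_eq_sum_sum_ite {ι M : Type*} [Fintype ι] [DecidableEq ι] [AddCommMonoid M]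
    (f : ι × ι → M) :
    ∑ p ∈ univ.offDiag, f p = ∑ i, ∑ j, if i ≠ j then f (i, j) else 0 := by
  rw [← sum_product' univ univ fun i j => if i ≠ j then f (i, j) else 0, ← sum_filter]
  congr 1
  ext p
  simp

section Signs

variable {ι : Type*} [DecidableEq ι]

lemma sgn_not (b : Bool) : sgn (!b) = -sgn b := by cases b <;> simp [sgn]

lemma sgn_mul_self (b : Bool) : sgn b * sgn b = 1 := by cases b <;> simp [sgn]

def flipAt (t : ι) (g : ι → Bool) : ι → Bool := Function.update g t (!g t)

lemma flipAt_apply_self (t : ι) (g : ι → Bool) : flipAt t g t = !g t := by simp [flipAt]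

lemma flipAt_apply_of_ne {s t : ι} (h : s ≠ t) (g : ι → Bool) : flipAt t g s = g s := by
  simp [flipAt, h]

lemma flipAt_involutive (t : ι) : Function.Involutive (flipAt t) := by
  intro g
  ext s
  by_cases h : s = t
  · subst h; simp [flipAt_apply_self]
  · simp [flipAt_apply_of_ne h]

variable [Fintype ι]

-- `flipAt t` permutes the sample space and negates `sgn (g t)` while fixing `F`.
lemma expect_sgn_mul_eq_zero (t : ι) {F : (ι → Bool) → ℝ} (hF : ∀ g, F (flipAt t g) = F g) :
    𝔼 g, sgn (g t) * F g = 0 := by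
  have h := Fintype.expect_equiv (flipAt_involutive t).toPerm (fun g => sgn (g t) * F g)
    (fun g => -(sgn (g t) * F g)) fun g => by
      simp [flipAt_apply_self, sgn_not, hF]
  rw [expect_neg_distrib] at h
  linarith

lemma expect_sgn_mul_sgn (i k : ι) :
    𝔼 g : ι → Bool, sgn (g i) * sgn (g k) = if i = k then 1 else 0 := by
  split_ifs with h
  · simp [h, sgn_mul_self]
  · exact expect_sgn_mul_eq_zero i fun g => by rw [flipAt_apply_of_ne (Ne.symm h)]

lemma expect_sgn_mul_sgn_mul_sgn_mul_sgn {p q : ι × ι} (hp : p.1 ≠ p.2) (hq : q.1 ≠ q.2) :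
    𝔼 g : ι → Bool, sgn (g p.1) * sgn (g p.2) * (sgn (g q.1) * sgn (g q.2)) =
      if q = p ∨ q = p.swap then 1 else 0 := by
  obtain ⟨i, k⟩ := p
  obtain ⟨i', k'⟩ := q
  dsimp only at hp hq ⊢
  split_ifs with h
  · have hsq (g : ι → Bool) : sgn (g i) * sgn (g k) * (sgn (g i') * sgn (g k')) = 1 := by
      rcases h with h | h <;> simp only [Prod.mk.injEq, Prod.swap_prod_mk] at h <;>
        obtain ⟨rfl, rfl⟩ := h
      · rw [mul_mul_mul_comm, sgn_mul_self, sgn_mul_self, one_mul]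
      · rw [mul_comm (sgn (g i')), mul_mul_mul_comm, sgn_mul_self, sgn_mul_self, one_mul]
    simp [hsq]
  · simp only [Prod.mk.injEq, Prod.swap_prod_mk, not_or, not_and] at h
    by_cases hi : i = i' ∨ i = k'
    · have hk : k ≠ i' ∧ k ≠ k' := by grind
      have hF (g : ι → Bool) : sgn (flipAt k g i) * (sgn (flipAt k g i') * sgn (flipAt k g k')) =
          sgn (g i) * (sgn (g i') * sgn (g k')) := by
        rw [flipAt_apply_of_ne hp, flipAt_apply_of_ne hk.1.symm, flipAt_apply_of_ne hk.2.symm]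
      calc _ = 𝔼 g : ι → Bool, sgn (g k) * (sgn (g i) * (sgn (g i') * sgn (g k'))) := by
            congr 1; ext g; ring
        _ = 0 := expect_sgn_mul_eq_zero k hF
    · push Not at hi
      have hF (g : ι → Bool) : sgn (flipAt i g k) * (sgn (flipAt i g i') * sgn (flipAt i g k')) =
          sgn (g k) * (sgn (g i') * sgn (g k')) := by
        rw [flipAt_apply_of_ne hp.symm, flipAt_apply_of_ne (Ne.symm hi.1),
          flipAt_apply_of_ne (Ne.symm hi.2)]
      simp_rw [mul_assoc]
      exact expect_sgn_mul_eq_zero i hF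

end Signs

section CollisionSign

variable {ι β : Type*} [DecidableEq β]

def collisionSign (i k : ι) (ω : (ι → β) × (ι → Bool)) : ℝ :=
  (if ω.1 i = ω.1 k then 1 else 0) * (sgn (ω.2 i) * sgn (ω.2 k))

lemma collisionSign_self (i : ι) (ω : (ι → β) × (ι → Bool)) : collisionSign i i ω = 1 := by
  simp [collisionSign, sgn_mul_self]

variable [Fintype ι] [DecidableEq ι] [Fintype β]

lemma expect_collisionSign {i k : ι} (hik : i ≠ k) :
    𝔼 ω : (ι → β) × (ι → Bool), collisionSign i k ω = 0 := by
  simp only [collisionSign]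
  rw [expect_fst_mul_snd (fun h : ι → β => if h i = h k then (1 : ℝ) else 0)
    fun g : ι → Bool => sgn (g i) * sgn (g k), expect_sgn_mul_sgn, if_neg hik, mul_zero]

lemma expect_collisionSign_mul_collisionSign [Nonempty β] {p q : ι × ι} (hp : p.1 ≠ p.2)
    (hq : q.1 ≠ q.2) :
    𝔼 ω : (ι → β) × (ι → Bool), collisionSign p.1 p.2 ω * collisionSign q.1 q.2 ω =
      1 / Fintype.card β * if q = p ∨ q = p.swap then 1 else 0 := by
  simp_rw [collisionSign, mul_mul_mul_comm _ (sgn _ * sgn _)]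
  rw [expect_fst_mul_snd (fun h : ι → β => (if h p.1 = h p.2 then (1 : ℝ) else 0) *
      if h q.1 = h q.2 then 1 else 0) fun g : ι → Bool =>
      sgn (g p.1) * sgn (g p.2) * (sgn (g q.1) * sgn (g q.2)),
    expect_sgn_mul_sgn_mul_sgn_mul_sgn hp hq]
  split_ifs with hqp
  · rw [mul_one, mul_one, ← expect_ite_apply_eq_apply hp]
    refine expect_congr (M := ℝ) rfl fun h _ => ?_
    rcases hqp with rfl | rfl <;> grind
  · rw [mul_zero, mul_zero]

lemma expect_sum_offDiag_collisionSign (a : ι × ι → ℝ) :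
    𝔼 ω : (ι → β) × (ι → Bool), ∑ p ∈ univ.offDiag, a p * collisionSign p.1 p.2 ω = 0 := by
  rw [expect_sum_comm]
  refine sum_eq_zero fun p hp => ?_
  rw [← mul_expect, expect_collisionSign (mem_offDiag.1 hp).2.2, mul_zero]

lemma expect_sq_sum_offDiag_collisionSign [Nonempty β] (a : ι × ι → ℝ) :
    𝔼 ω : (ι → β) × (ι → Bool), (∑ p ∈ univ.offDiag, a p * collisionSign p.1 p.2 ω) ^ 2 =
      1 / Fintype.card β * ∑ p ∈ univ.offDiag, a p * (a p + a p.swap) := by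
  simp_rw [sq, sum_mul_sum, expect_sum_comm, mul_sum]
  refine sum_congr rfl fun p hp => ?_
  have hp' : p.swap ∈ univ.offDiag := by simpa [mem_offDiag, eq_comm] using hp
  have hpq (q : ι × ι) (hq : q ∈ univ.offDiag) :
      𝔼 ω : (ι → β) × (ι → Bool), a p * collisionSign p.1 p.2 ω * (a q * collisionSign q.1 q.2 ω) =
        1 / Fintype.card β * a p *
          ((if q = p then a q else 0) + if q = p.swap then a q else 0) := by
    rw [Finset.expect_congr rfl fun ω _ => mul_mul_mul_comm .., ← mul_expect,
      expect_collisionSign_mul_collisionSign (mem_offDiag.1 hp).2.2 (mem_offDiag.1 hq).2.2]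
    grind
  rw [sum_congr rfl hpq, ← mul_sum, sum_add_distrib, sum_ite_eq' _ _ a, sum_ite_eq' _ _ a,
    if_pos hp, if_pos hp', mul_assoc]

end CollisionSign

lemma est1_eq_sum_sum_collisionSign (n m : ℕ) (x y : Fin n → ℝ)
    (ω : (Fin n → Fin m) × (Fin n → Bool)) :
    est1 n m x y ω = ∑ i, ∑ k, x i * y k * collisionSign i k ω := by
  simp_rw [est1, sum_mul_sum]
  rw [sum_comm]
  refine sum_congr rfl fun i _ => ?_
  rw [sum_comm]
  refine sum_congr rfl fun k _ => ?_
  simp only [collisionSign, eq_comm, mul_ite, ite_mul, mul_one, mul_zero, zero_mul, one_mul,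
    sum_ite_eq', mem_univ, ↓reduceIte]
  split_ifs <;> ring

lemma est1_eq_add_sum_offDiag (n m : ℕ) (x y : Fin n → ℝ) (ω : (Fin n → Fin m) × (Fin n → Bool)) :
    est1 n m x y ω =
      ∑ i, x i * y i + ∑ p ∈ univ.offDiag, x p.1 * y p.2 * collisionSign p.1 p.2 ω := by
  rw [est1_eq_sum_sum_collisionSign,
    ← sum_product' univ univ fun i k => x i * y k * collisionSign i k ω,
    ← diag_union_offDiag, sum_union (disjoint_diag_offDiag _), sum_diag]
  simp only [collisionSign_self, mul_one]

lemma expec1_eq_expect (n m : ℕ) (f : (Fin n → Fin m) × (Fin n → Bool) → ℝ) :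
    expec1 n m f = 𝔼 ω, f ω :=
  (Fintype.expect_eq_sum_div_card f).symm

theorem feature_hashing_variance_general (n m : ℕ) (hm : 0 < m)
    (x y : Fin n → ℝ) :
    var1 n m x y =
      (1 / (m : ℝ)) *
        ((∑ i : Fin n, ∑ j : Fin n, if i ≠ j then x i ^ 2 * y j ^ 2 else 0) +
         (∑ i : Fin n, ∑ j : Fin n, if i ≠ j then x i * y i * x j * y j else 0)) := by
  have : Nonempty (Fin m) := Fin.pos_iff_nonempty.mp hm
  set a : Fin n × Fin n → ℝ := fun p => x p.1 * y p.2
  calc var1 n m x y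
      = 𝔼 ω, (∑ p ∈ univ.offDiag, a p * collisionSign p.1 p.2 ω) ^ 2 -
          (𝔼 ω : (Fin n → Fin m) × (Fin n → Bool),
            ∑ p ∈ univ.offDiag, a p * collisionSign p.1 p.2 ω) ^ 2 := by
        simp only [var1, expec1_eq_expect, est1_eq_add_sum_offDiag]
        exact expect_const_add_sq_sub_sq_expect _ _
    _ = 1 / m * ∑ p ∈ univ.offDiag, a p * (a p + a p.swap) := by
        rw [expect_sq_sum_offDiag_collisionSign, expect_sum_offDiag_collisionSign, Fintype.card_fin]
        ring
    _ = _ := by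
        simp only [a, Prod.fst_swap, Prod.snd_swap]
        rw [← sum_offDiag_eq_sum_sum_ite (fun p => x p.1 ^ 2 * y p.2 ^ 2),
          ← sum_offDiag_eq_sum_sum_ite (fun p => x p.1 * y p.1 * x p.2 * y p.2), ← sum_add_distrib]
        congr 1
        exact sum_congr rfl fun p _ => by ring

/-- For feature hashing (ROBE-Z with Z = 1), the variance of
the estimator equals `(1/m)·(Σ_{i≠j} x_i² y_j² + Σ_{i≠j} x_i y_i x_j y_j)`. -/
theorem feature_hashing_variance (n m : ℕ) (hn : 0 < n) (hm : 0 < m) (hmn : m ≤ n)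
    (x y : Fin n → ℝ) :
    var1 n m x y =
      (1 / (m : ℝ)) *
        ((∑ i : Fin n, ∑ j : Fin n, if i ≠ j then x i ^ 2 * y j ^ 2 else 0) +
         (∑ i : Fin n, ∑ j : Fin n, if i ≠ j then x i * y i * x j * y j else 0)) :=
  feature_hashing_variance_general n m hm x y
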